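/- Fix an instruction field I, an odometer h, and V ⊆ ℤ^d. If η ≤ η̄ pointwise (in the order of ℕ_𝔰 where 0 < 𝔰 < 1 < 2 < ⋯), and α is an acceptable sequence of topplings for (η̄,h) such that Φ_α(η̄,h) is stable in V, then m_{V,η,h}(x) ≤ m_α(x) for every x ∈ ℤ^d. -/

import Mathlib

open scoped ENNReal NNReal
open MeasureTheory

namespace ARW

/-- A site of the lattice `ℤ^d`. -/
abbrev Site (d : ℕ) := Fin d → ℤ

/-- The set `ℕ_𝔰 = ℕ ∪ {𝔰}` of possible values at a site. -/
inductive NS where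
  | nat : ℕ → NS
  | s : NS
deriving DecidableEq

/-- Rank function realizing the total order `0 < 𝔰 < 1 < 2 < ⋯`
(`𝔰` is placed at `1/2`). -/
def NS.val : NS → ℚ
  | .nat n => n
  | .s => 1/2

instance : LE NS := ⟨fun a b => a.val ≤ b.val⟩
instance : LT NS := ⟨fun a b => a.val < b.val⟩

/-- Remove one particle: `n − 1`, with `𝔰 − 1 = 0`. -/
def NS.dec : NS → NS
  | .nat 0 => .nat 0
  | .nat (n+1) => .nat n
  | .s => .nat 0

/-- Add one particle: `n + 1`, with `𝔰 + 1 = 2`. -/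
def NS.inc : NS → NS
  | .nat n => .nat (n+1)
  | .s => .nat 2

/-- Multiplication by `𝔰`: `n·𝔰 = n` for `n ≥ 2`, `1·𝔰 = 𝔰`, `𝔰·𝔰 = 𝔰`. -/
def NS.mulS : NS → NS
  | .nat 0 => .nat 0
  | .nat 1 => .s
  | .nat (n+2) => .nat (n+2)
  | .s => .s

/-- A configuration of the ARW. -/
abbrev Config (d : ℕ) := Site d → NS

/-- An odometer. -/
abbrev Odom (d : ℕ) := Site d → ℕ

/-- An instruction: either a sleep instruction `τ_{x𝔰}`, or a move instruction
`τ_{xy}` recorded through the displacement `z = y − x ≠ 0`. -/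
inductive Instr (d : ℕ) where
  | sleep : Instr d
  | move : (z : Site d) → z ≠ 0 → Instr d

/-- Applying an instruction at site `x` to a configuration: `τ_{x𝔰}` replaces `η(x)` by
`η(x)·𝔰`; `τ_{xy}` (with `y = x + z`) decreases `η(x)` by one and increases `η(y)` by one. -/
def applyInstr {d : ℕ} (x : Site d) (ι : Instr d) (η : Config d) : Config d :=
  match ι with
  | .sleep => Function.update η x (η x).mulS
  | .move z _ => fun w =>
      if w = x then (η x).dec
      else if w = x + z then (η (x + z)).inc
      else η w

/-- A field of instructions `(τ^{x,j})_{x ∈ ℤ^d, j ∈ ℕ}`. -/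
abbrev InstrField (d : ℕ) := Site d → ℕ → Instr d

/-- Toppling site `x`: `Φ_x(η,h) = (τ^{x,h(x)+1} η, h + δ_x)`. -/
def topple {d : ℕ} (I : InstrField d) (x : Site d) (s : Config d × Odom d) :
    Config d × Odom d :=
  (applyInstr x (I x (s.2 x + 1)) s.1, Function.update s.2 x (s.2 x + 1))

/-- `Φ_α` for a finite sequence `α = (x_1, …, x_k)` of sites (`x_1` acts first). -/
def toppleSeq {d : ℕ} (I : InstrField d) :
    List (Site d) → Config d × Odom d → Config d × Odom d
  | [], s => s
  | x :: α, s => toppleSeq I α (topple I x s)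

/-- Site `x` is unstable for `η` if `η(x) ≥ 1`. -/
def Unstable {d : ℕ} (η : Config d) (x : Site d) : Prop := NS.nat 1 ≤ η x

/-- Toppling `x` is acceptable for `η` if `η(x) ≠ 0`. -/
def AcceptableAt {d : ℕ} (η : Config d) (x : Site d) : Prop := η x ≠ NS.nat 0

/-- `α` is a legal sequence of topplings for `(η,h)`: each successive toppling is legal. -/
inductive LegalSeq {d : ℕ} (I : InstrField d) : List (Site d) → Config d × Odom d → Prop
  | nil (s : Config d × Odom d) : LegalSeq I [] s
  | cons {x : Site d} {α : List (Site d)} {s : Config d × Odom d} :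
      Unstable s.1 x → LegalSeq I α (topple I x s) → LegalSeq I (x :: α) s

/-- `α` is an acceptable sequence of topplings for `(η,h)`. -/
inductive AcceptableSeq {d : ℕ} (I : InstrField d) : List (Site d) → Config d × Odom d → Prop
  | nil (s : Config d × Odom d) : AcceptableSeq I [] s
  | cons {x : Site d} {α : List (Site d)} {s : Config d × Odom d} :
      AcceptableAt s.1 x → AcceptableSeq I α (topple I x s) → AcceptableSeq I (x :: α) s

/-- `η` is stable in `V`: every `x ∈ V` is stable for `η`. -/
def StableIn {d : ℕ} (η : Config d) (V : Set (Site d)) : Prop :=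
  ∀ x ∈ V, ¬ Unstable η x

/-- `m_{V,η,h}(x) = sup { m_β(x) : β ⊆ V legal for (η,h) }`, as an element of `ℕ∞`. -/
noncomputable def mV {d : ℕ} (I : InstrField d) (V : Set (Site d)) (η : Config d) (h : Odom d)
    (x : Site d) : ℕ∞ :=
  ⨆ (β : List (Site d)) (_ : (∀ y ∈ β, y ∈ V) ∧ LegalSeq I β (η, h)), (β.count x : ℕ∞)

/-- `m_{η,h} = m_{ℤ^d,η,h}`. -/
noncomputable def mFull {d : ℕ} (I : InstrField d) (η : Config d) (h : Odom d) :
    Site d → ℕ∞ :=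
  mV I Set.univ η h

/-- The zero odometer. -/
def zeroOdom (d : ℕ) : Odom d := fun _ => 0

/-- `η` is `I`-stabilizable: `m_{η;I}(x) < ∞` for every `x`. -/
def Stabilizable {d : ℕ} (I : InstrField d) (η : Config d) : Prop :=
  ∀ x : Site d, mFull I η (zeroOdom d) x < ⊤

/-- `η` is `I`-explosive: `m_{η;I}(x) = ∞` for every `x`. -/
def Explosive {d : ℕ} (I : InstrField d) (η : Config d) : Prop :=
  ∀ x : Site d, mFull I η (zeroOdom d) x = ⊤

/-!
If `β` is legal for `(η, h)` and starts with `b ∈ V`, then `b` carries a particle for `η̄ ≥ η`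
too. Toppling other sites never lowers `η̄(b)`, so a stabilizing `α` must topple `b`; since
acceptable topplings at distinct sites commute, its first toppling of `b` can be moved to the
front without changing the outcome. Toppling `b` in both systems keeps `η ≤ η̄` and the
odometers equal, and induction on `β` gives `m_β ≤ m_α`.
-/

namespace NS

def rank : NS → ℕ
  | .nat n => 2 * n
  | .s => 1

lemma val_eq_rank_div_two (a : NS) : a.val = a.rank / 2 := by
  cases a <;> simp [val, rank]

lemma le_iff_rank_le {a b : NS} : a ≤ b ↔ a.rank ≤ b.rank := by
  change a.val ≤ b.val ↔ _
  rw [val_eq_rank_div_two, val_eq_rank_div_two, div_le_div_iff_of_pos_right two_pos,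
    Nat.cast_le]

lemma le_trans {a b c : NS} (hab : a ≤ b) (hbc : b ≤ c) : a ≤ c := by
  rw [le_iff_rank_le] at *
  omega

lemma ne_zero_of_one_le {v : NS} (h : NS.nat 1 ≤ v) : v ≠ .nat 0 := by
  rintro rfl
  simp [le_iff_rank_le, rank] at h

lemma one_le_inc (v : NS) : NS.nat 1 ≤ v.inc := by
  rcases v with n | - <;> simp [le_iff_rank_le, inc, rank]

lemma inc_ne_zero (v : NS) : v.inc ≠ .nat 0 :=
  ne_zero_of_one_le (one_le_inc v)

lemma inc_mono {v w : NS} (h : v ≤ w) : v.inc ≤ w.inc := by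
  rw [le_iff_rank_le] at *
  rcases v with n | - <;> rcases w with m | - <;> simp [inc, rank] at * <;> omega

lemma dec_mono {v w : NS} (h : v ≤ w) : v.dec ≤ w.dec := by
  rw [le_iff_rank_le] at *
  rcases v with (_ | n) | - <;> rcases w with (_ | m) | - <;> simp [dec, rank] at * <;> omega

lemma mulS_mono {v w : NS} (h : v ≤ w) : v.mulS ≤ w.mulS := by
  rw [le_iff_rank_le] at *
  rcases v with (_ | _ | n) | - <;> rcases w with (_ | _ | m) | - <;>
    simp [mulS, rank] at * <;> omega

lemma dec_inc {v : NS} (h : v ≠ .nat 0) : v.inc.dec = v.dec.inc := by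
  rcases v with (_ | n) | - <;> simp_all [inc, dec]

lemma mulS_inc {v : NS} (h : v ≠ .nat 0) : v.inc.mulS = v.mulS.inc := by
  rcases v with (_ | _ | n) | - <;> simp_all [inc, mulS]

end NS

/-- Instructions act site by site: this is the action of `ι`, used at `x`, on the value at `w`. -/
def Instr.effect {d : ℕ} (x : Site d) : Instr d → Site d → NS → NS
  | .sleep, w => if w = x then NS.mulS else id
  | .move z _, w => if w = x then NS.dec else if w = x + z then NS.inc else id

namespace Instr

variable {d : ℕ} {x w : Site d} (ι : Instr d)

lemma effect_of_ne (hw : w ≠ x) : ι.effect x w = id ∨ ι.effect x w = NS.inc := by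
  cases ι with
  | sleep => simp [effect, hw]
  | move z _ =>
    by_cases hz : w = x + z
    · simp only [effect, if_neg hw, if_pos hz, or_true]
    · simp only [effect, if_neg hw, if_neg hz, true_or]

lemma effect_mono {v v' : NS} (h : v ≤ v') : ι.effect x w v ≤ ι.effect x w v' := by
  cases ι <;> simp only [effect] <;> split_ifs
  all_goals first
    | exact h | exact NS.mulS_mono h | exact NS.dec_mono h | exact NS.inc_mono h

lemma effect_inc {v : NS} (hv : w = x → v ≠ .nat 0) :
    ι.effect x w v.inc = (ι.effect x w v).inc := by
  by_cases hw : w = x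
  · subst hw
    cases ι <;> simp [effect, NS.mulS_inc (hv rfl), NS.dec_inc (hv rfl)]
  · rcases ι.effect_of_ne hw with h | h <;> simp [h]

end Instr

lemma applyInstr_eq_effect {d : ℕ} (x : Site d) (ι : Instr d) (η : Config d) :
    applyInstr x ι η = fun w => ι.effect x w (η w) := by
  funext w
  cases ι with
  | sleep => by_cases hw : w = x <;> simp [applyInstr, Instr.effect, hw]
  | move z _ =>
    simp only [applyInstr, Instr.effect]
    split_ifs <;> simp_all

lemma applyInstr_comm {d : ℕ} {x y : Site d} (hxy : x ≠ y) (ι₁ ι₂ : Instr d) {η : Config d}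
    (hx : η x ≠ .nat 0) (hy : η y ≠ .nat 0) :
    applyInstr x ι₁ (applyInstr y ι₂ η) = applyInstr y ι₂ (applyInstr x ι₁ η) := by
  simp only [applyInstr_eq_effect]
  funext w
  by_cases hwx : w = x
  · subst hwx
    rcases ι₂.effect_of_ne hxy with h | h
    · simp [h]
    · simp [h, ι₁.effect_inc fun _ => hx]
  · rcases ι₁.effect_of_ne hwx with h | h
    · simp [h]
    · rw [h]
      exact (ι₂.effect_inc (x := y) (w := w) fun hwy => by rwa [hwy]).symm

section Topple

variable {d : ℕ} (I : InstrField d)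

lemma topple_fst_apply_of_ne {x w : Site d} (hw : w ≠ x) (s : Config d × Odom d) :
    (topple I x s).1 w = s.1 w ∨ (topple I x s).1 w = (s.1 w).inc := by
  rcases (I x (s.2 x + 1)).effect_of_ne hw with h | h <;>
    simp [topple, applyInstr_eq_effect, h]

lemma one_le_topple_fst_of_ne {x w : Site d} (hw : w ≠ x) {s : Config d × Odom d}
    (h : NS.nat 1 ≤ s.1 w) : NS.nat 1 ≤ (topple I x s).1 w := by
  rcases topple_fst_apply_of_ne I hw s with h' | h' <;> rw [h']
  · exact h
  · exact NS.one_le_inc _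

lemma acceptableAt_topple_of_ne {x w : Site d} (hw : w ≠ x) {s : Config d × Odom d}
    (h : AcceptableAt s.1 w) : AcceptableAt (topple I x s).1 w := by
  rcases topple_fst_apply_of_ne I hw s with h' | h' <;> rw [AcceptableAt, h']
  · exact h
  · exact NS.inc_ne_zero _

lemma topple_fst_mono (x : Site d) {η ηb : Config d} (h : Odom d)
    (hle : ∀ w, η w ≤ ηb w) (w : Site d) :
    (topple I x (η, h)).1 w ≤ (topple I x (ηb, h)).1 w := by
  simpa [topple, applyInstr_eq_effect] using Instr.effect_mono _ (hle w)

lemma topple_comm {x y : Site d} (hxy : x ≠ y) {s : Config d × Odom d}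
    (hx : AcceptableAt s.1 x) (hy : AcceptableAt s.1 y) :
    topple I x (topple I y s) = topple I y (topple I x s) := by
  simp only [topple, Function.update_of_ne hxy, Function.update_of_ne hxy.symm,
    applyInstr_comm hxy _ _ hx hy, Function.update_comm hxy]

lemma one_le_toppleSeq_fst_of_notMem {b : Site d} {α : List (Site d)} (hb : b ∉ α)
    {s : Config d × Odom d} (h : NS.nat 1 ≤ s.1 b) : NS.nat 1 ≤ (toppleSeq I α s).1 b := by
  induction α generalizing s with
  | nil => exact h
  | cons y α ih =>
    rw [List.mem_cons, not_or] at hb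
    exact ih hb.2 (one_le_topple_fst_of_ne I hb.1 h)

lemma mem_of_stableIn_toppleSeq {V : Set (Site d)} {α : List (Site d)}
    {s : Config d × Odom d} (hstab : StableIn (toppleSeq I α s).1 V) {b : Site d} (hbV : b ∈ V)
    (hb : Unstable s.1 b) : b ∈ α := by
  by_contra hbα
  exact hstab b hbV (one_le_toppleSeq_fst_of_notMem I hbα hb)

lemma AcceptableSeq.exists_perm_cons {b : Site d} {α : List (Site d)} {s : Config d × Odom d}
    (hacc : AcceptableSeq I α s) (hbα : b ∈ α) (hb : Unstable s.1 b) :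
    ∃ α', α.Perm (b :: α') ∧ AcceptableSeq I (b :: α') s ∧
      toppleSeq I (b :: α') s = toppleSeq I α s := by
  induction hacc with
  | nil => simp at hbα
  | @cons y α s hy htail ih =>
    by_cases hyb : y = b
    · subst hyb
      exact ⟨α, .rfl, .cons hy htail, rfl⟩
    have hb' := one_le_topple_fst_of_ne I (Ne.symm hyb) hb
    obtain ⟨α', hperm, hacc', heq⟩ := ih ((List.mem_cons.mp hbα).resolve_left (Ne.symm hyb)) hb'
    obtain _ | ⟨-, hrest⟩ := hacc'
    have hswap := topple_comm I (Ne.symm hyb) (NS.ne_zero_of_one_le hb) hy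
    refine ⟨y :: α', (hperm.cons y).trans (.swap b y α'), ?_, ?_⟩
    · refine .cons (NS.ne_zero_of_one_le hb) (.cons ?_ ?_)
      · exact acceptableAt_topple_of_ne I hyb hy
      · rwa [← hswap]
    · change toppleSeq I α' (topple I y (topple I b s)) = toppleSeq I α (topple I y s)
      rw [← hswap]
      exact heq

lemma LegalSeq.count_le {V : Set (Site d)} {β : List (Site d)} {s : Config d × Odom d}
    (hleg : LegalSeq I β s) (hβV : ∀ y ∈ β, y ∈ V) {α : List (Site d)} {ηb : Config d}
    (hle : ∀ w, s.1 w ≤ ηb w) (hacc : AcceptableSeq I α (ηb, s.2))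
    (hstab : StableIn (toppleSeq I α (ηb, s.2)).1 V) (x : Site d) :
    β.count x ≤ α.count x := by
  induction hleg generalizing α ηb with
  | nil => simp
  | @cons b β s hb _ ih =>
    have hbb : Unstable ηb b := NS.le_trans hb (hle b)
    have hbα := mem_of_stableIn_toppleSeq I hstab (hβV b List.mem_cons_self) hbb
    obtain ⟨α', hperm, hacc', heq⟩ := hacc.exists_perm_cons I hbα hbb
    obtain _ | ⟨-, hrest⟩ := hacc'
    have hcount : β.count x ≤ α'.count x :=
      ih (fun y hy => hβV y (List.mem_cons_of_mem b hy)) (topple_fst_mono I b s.2 hle) hrest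
        (heq ▸ hstab)
    rw [hperm.count_eq, List.count_cons, List.count_cons]
    omega

end Topple

/-- **Least Action Principle with a larger configuration**: if `η ≤ η̄` pointwise and `α`
is an acceptable sequence of topplings for `(η̄,h)` whose result is stable in `V`, then
`m_{V,η,h} ≤ m_α`. -/
theorem least_action_principle_mono {d : ℕ} (I : InstrField d) (h : Odom d)
    (V : Set (Site d)) (η ηb : Config d) (hle : ∀ x : Site d, η x ≤ ηb x)
    (α : List (Site d))
    (hα : AcceptableSeq I α (ηb, h))
    (hstab : StableIn (toppleSeq I α (ηb, h)).1 V) :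
    ∀ x : Site d, mV I V η h x ≤ (α.count x : ℕ∞) := by
  intro x
  refine iSup₂_le fun β hβ => ?_
  exact_mod_cast hβ.2.count_le I hβ.1 hle hα hstab x

end ARW
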